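/- KL-divergence storage function dissipation: let z: [0,∞) → R^n solve ż = p − z for a continuous payoff p, fix s ∈ [0,1], and set ξ = (1+s)z and V(ξ) = (1/(1+s)²) D_KL(σ(ξ) ‖ (1/n)1_n). Then along trajectories, dV/dt ≤ p·y where y = (1/(1+s)) ∇σ(ξ) ξ; equivalently, dV/dt = (1/(1+s)) p^⊤∇σ(ξ)ξ − z^⊤∇σ(ξ)z ≤ p^⊤ y. -/

import Mathlib

open Matrix

noncomputable def softmax {n : ℕ} (v : Fin n → ℝ) : Fin n → ℝ :=
  fun i => Real.exp (v i) / ∑ j, Real.exp (v j)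

/-- The Jacobian of softmax: `diag(σ(v)) − σ(v)σ(v)ᵀ`. -/
noncomputable def softmaxJac {n : ℕ} (v : Fin n → ℝ) : Matrix (Fin n) (Fin n) ℝ :=
  Matrix.diagonal (softmax v) - Matrix.of fun i j => softmax v i * softmax v j

/-- KL divergence of `σ(ξ)` from the uniform distribution. -/
noncomputable def klFromUniform {n : ℕ} (ξ : Fin n → ℝ) : ℝ :=
  ∑ i, softmax ξ i * Real.log (softmax ξ i / (1 / (n : ℝ)))

/-!
Writing `V(ξ) = ξ ⬝ σ(ξ) - log ∑ exp ξⱼ + log n` and using that the gradient of log-sum-exp is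
`σ`, the derivative of `V` along a curve `ξ(t)` is `ξ ⬝ ∇σ(ξ) ξ' = ξ' ⬝ ∇σ(ξ) ξ` (`∇σ` is
symmetric). With `ξ = (1 + s) z` and `ξ' = (1 + s)(p - z)` this is the stated `dV/dt`, and the
inequality is `z ⬝ ∇σ(ξ) z ≥ 0`: this quadratic form is the variance of `z` under `σ(ξ)`.
-/

open Finset Real

theorem HasDerivAt.dotProduct {𝕜 ι : Type*} [NontriviallyNormedField 𝕜] [Fintype ι]
    {f g : 𝕜 → ι → 𝕜} {f' g' : ι → 𝕜} {x : 𝕜} (hf : HasDerivAt f f' x)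
    (hg : HasDerivAt g g' x) :
    HasDerivAt (fun y => f y ⬝ᵥ g y) (f' ⬝ᵥ g x + f x ⬝ᵥ g') x := by
  simpa only [_root_.dotProduct, ← sum_add_distrib] using HasDerivAt.fun_sum (u := univ)
    fun i _ => (hasDerivAt_pi.mp hf i).fun_mul (hasDerivAt_pi.mp hg i)

section Softmax

variable {n : ℕ}

lemma sum_exp_pos [Nonempty (Fin n)] (v : Fin n → ℝ) : 0 < ∑ j, exp (v j) :=
  sum_pos (fun _ _ => exp_pos _) univ_nonempty

lemma softmax_pos [Nonempty (Fin n)] (v : Fin n → ℝ) (i : Fin n) : 0 < softmax v i :=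
  div_pos (exp_pos _) (sum_exp_pos v)

lemma sum_softmax [Nonempty (Fin n)] (v : Fin n → ℝ) : ∑ i, softmax v i = 1 := by
  simp only [softmax, ← sum_div]
  exact div_self (sum_exp_pos v).ne'

lemma softmax_dotProduct (v w : Fin n → ℝ) :
    softmax v ⬝ᵥ w = (∑ j, exp (v j) * w j) / ∑ j, exp (v j) := by
  simp only [dotProduct, softmax, sum_div, div_mul_eq_mul_div]

lemma softmaxJac_mulVec (v w : Fin n → ℝ) :
    softmaxJac v *ᵥ w = fun i => softmax v i * (w i - softmax v ⬝ᵥ w) := by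
  ext i
  simp only [softmaxJac, sub_mulVec, mulVec_diagonal, Pi.sub_apply]
  simp [mulVec, dotProduct, mul_assoc, mul_sum, mul_sub]

lemma softmaxJac_isSymm (v : Fin n → ℝ) : (softmaxJac v).IsSymm :=
  (isSymm_diagonal _).sub (IsSymm.ext fun _ _ => mul_comm _ _)

lemma dotProduct_softmaxJac_mulVec_comm (v u w : Fin n → ℝ) :
    u ⬝ᵥ softmaxJac v *ᵥ w = w ⬝ᵥ softmaxJac v *ᵥ u := by
  conv_lhs => rw [← (softmaxJac_isSymm v).eq]
  exact dotProduct_transpose_mulVec _ _ _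

lemma dotProduct_softmaxJac_mulVec_self [Nonempty (Fin n)] (v w : Fin n → ℝ) :
    w ⬝ᵥ softmaxJac v *ᵥ w = ∑ i, softmax v i * (w i - softmax v ⬝ᵥ w) ^ 2 := by
  set m := softmax v ⬝ᵥ w
  have hcentered : ∑ i, softmax v i * (w i - m) = 0 := by
    simp only [mul_sub, sum_sub_distrib, ← sum_mul, sum_softmax, one_mul]
    exact sub_self m
  calc w ⬝ᵥ softmaxJac v *ᵥ w = ∑ i, softmax v i * (w i - m) * w i := by
        rw [softmaxJac_mulVec, dotProduct]
        exact sum_congr rfl fun i _ => by ring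
    _ = ∑ i, softmax v i * (w i - m) * w i - m * ∑ i, softmax v i * (w i - m) := by
        rw [hcentered, mul_zero, sub_zero]
    _ = ∑ i, softmax v i * (w i - m) ^ 2 := by
        rw [mul_sum, ← sum_sub_distrib]
        exact sum_congr rfl fun i _ => by ring

lemma softmaxJac_posSemidef (v : Fin n → ℝ) : (softmaxJac v).PosSemidef := by
  refine .of_dotProduct_mulVec_nonneg (isHermitian_iff_isSymm.mpr (softmaxJac_isSymm v))
    fun w => ?_
  rcases isEmpty_or_nonempty (Fin n) with _ | _
  · simp [dotProduct]
  · rw [star_trivial, dotProduct_softmaxJac_mulVec_self]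
    exact sum_nonneg fun i _ => mul_nonneg (softmax_pos v i).le (sq_nonneg _)

lemma klFromUniform_eq [Nonempty (Fin n)] (v : Fin n → ℝ) :
    klFromUniform v = v ⬝ᵥ softmax v - log (∑ j, exp (v j)) + log n := by
  have hlog (i : Fin n) :
      log (softmax v i / (1 / (n : ℝ))) = v i - log (∑ j, exp (v j)) + log n := by
    have hn : (n : ℝ) ≠ 0 := by exact_mod_cast (Fin.pos_iff_nonempty.mpr ‹_›).ne'
    rw [one_div, div_inv_eq_mul, softmax, log_mul (div_pos (exp_pos _) (sum_exp_pos v)).ne' hn,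
      log_div (exp_pos _).ne' (sum_exp_pos v).ne', log_exp]
  simp only [klFromUniform, hlog, mul_add, mul_sub, sum_add_distrib, sum_sub_distrib, ← sum_mul,
    sum_softmax, one_mul, dotProduct, mul_comm (v _)]

end Softmax

section Trajectory

variable {n : ℕ} {ξ : ℝ → Fin n → ℝ} {ξ' : Fin n → ℝ} {t : ℝ}

lemma HasDerivAt.sum_exp (hξ : HasDerivAt ξ ξ' t) :
    HasDerivAt (fun t => ∑ j, Real.exp (ξ t j)) (∑ j, Real.exp (ξ t j) * ξ' j) t :=
  HasDerivAt.fun_sum fun j _ => (hasDerivAt_pi.mp hξ j).exp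

lemma HasDerivAt.softmax [Nonempty (Fin n)] (hξ : HasDerivAt ξ ξ' t) :
    HasDerivAt (fun t => _root_.softmax (ξ t)) (softmaxJac (ξ t) *ᵥ ξ') t := by
  refine hasDerivAt_pi.mpr fun i => ?_
  refine ((hasDerivAt_pi.mp hξ i).exp.div hξ.sum_exp (sum_exp_pos _).ne').congr_deriv ?_
  simp only [softmaxJac_mulVec, softmax_dotProduct, _root_.softmax]
  field_simp

lemma HasDerivAt.log_sum_exp [Nonempty (Fin n)] (hξ : HasDerivAt ξ ξ' t) :
    HasDerivAt (fun t => Real.log (∑ j, Real.exp (ξ t j))) (_root_.softmax (ξ t) ⬝ᵥ ξ') t := by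
  rw [softmax_dotProduct]
  exact hξ.sum_exp.log (sum_exp_pos _).ne'

theorem HasDerivAt.klFromUniform (hξ : HasDerivAt ξ ξ' t) :
    HasDerivAt (fun t => _root_.klFromUniform (ξ t)) (ξ' ⬝ᵥ softmaxJac (ξ t) *ᵥ ξ t) t := by
  rcases isEmpty_or_nonempty (Fin n) with _ | _
  · simpa [_root_.klFromUniform, dotProduct] using hasDerivAt_const t (0 : ℝ)
  simp_rw [klFromUniform_eq]
  refine (((hξ.dotProduct hξ.softmax).sub hξ.log_sum_exp).add_const (Real.log n)).congr_deriv ?_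
  rw [dotProduct_comm ξ', dotProduct_softmaxJac_mulVec_comm (ξ t) ξ']
  ring

end Trajectory

theorem kl_storage_dissipation_general (n : ℕ)
    (p z : ℝ → (Fin n → ℝ))
    (hz : ∀ t, HasDerivAt z (p t - z t) t)
    (s : ℝ) (hs : s ∈ Set.Icc (0:ℝ) 1) (t : ℝ) :
    HasDerivAt (fun t' => (1 / (1 + s)^2) * klFromUniform ((1 + s) • z t'))
      ((1 / (1 + s)) * (p t ⬝ᵥ (softmaxJac ((1 + s) • z t)).mulVec ((1 + s) • z t))
        - z t ⬝ᵥ (softmaxJac ((1 + s) • z t)).mulVec (z t)) t ∧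
    (1 / (1 + s)) * (p t ⬝ᵥ (softmaxJac ((1 + s) • z t)).mulVec ((1 + s) • z t))
        - z t ⬝ᵥ (softmaxJac ((1 + s) • z t)).mulVec (z t)
      ≤ p t ⬝ᵥ (1 / (1 + s)) • (softmaxJac ((1 + s) • z t)).mulVec ((1 + s) • z t) := by
  have hc : 1 + s ≠ 0 := by linarith [hs.1]
  refine ⟨?_, ?_⟩
  · refine ((((hz t).const_smul (1 + s)).klFromUniform).const_mul _).congr_deriv ?_
    simp only [Pi.smul_apply, smul_sub, sub_dotProduct, smul_dotProduct, mulVec_smul,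
      dotProduct_smul, smul_eq_mul]
    field_simp
  · rw [dotProduct_smul, smul_eq_mul, sub_le_self_iff]
    simpa using (softmaxJac_posSemidef _).dotProduct_mulVec_nonneg (z t)

theorem kl_storage_dissipation (n : ℕ) (hn : 0 < n)
    (p z : ℝ → (Fin n → ℝ)) (hp : Continuous p)
    (hz : ∀ t, HasDerivAt z (p t - z t) t)
    (s : ℝ) (hs : s ∈ Set.Icc (0:ℝ) 1) (t : ℝ) :
    HasDerivAt (fun t' => (1 / (1 + s)^2) * klFromUniform ((1 + s) • z t'))
      ((1 / (1 + s)) * (p t ⬝ᵥ (softmaxJac ((1 + s) • z t)).mulVec ((1 + s) • z t))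
        - z t ⬝ᵥ (softmaxJac ((1 + s) • z t)).mulVec (z t)) t ∧
    (1 / (1 + s)) * (p t ⬝ᵥ (softmaxJac ((1 + s) • z t)).mulVec ((1 + s) • z t))
        - z t ⬝ᵥ (softmaxJac ((1 + s) • z t)).mulVec (z t)
      ≤ p t ⬝ᵥ (1 / (1 + s)) • (softmaxJac ((1 + s) • z t)).mulVec ((1 + s) • z t) :=
  kl_storage_dissipation_general n p z hz s hs t
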